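/- arXiv:math/9804030 — 2 statements merged into one kernel-verified Lean document; each statement's English description precedes it below -/
import Mathlib

section
/- Let F be the free group on x₁, …, xₙ and let G = F / N where N is the normal closure of elements of the form [xᵢ, Wᵢ], i = 1, …, n, with each Wᵢ ∈ F. If π : F → G is the quotient map and π(Wᵢ) ∈ G^(m) for some m ≥ 1 and some fixed i such that Wᵢ ∈ F^(m-1), then Wᵢ ∈ F^(m). -/
/-- Paper-indexed lower central series: `G^(1) = G`, `G^(m+1) = [G^(m), G]`. -/
def paperLCS (G : Type*) [Group G] (m : ℕ) : Subgroup G := (⊤ : Subgroup G).lowerCentralSeries (m - 1)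


lemma lcs_map_surj {G H : Type*} [Group G] [Group H] (f : G →* H)
    (hf : Function.Surjective f) (k : ℕ) :
    Subgroup.map f ((⊤ : Subgroup G).lowerCentralSeries k) = (⊤ : Subgroup H).lowerCentralSeries k := by
  induction k with
  | zero => simpa using Subgroup.map_top_of_surjective f hf
  | succ k ih =>
      show Subgroup.map f ⁅(⊤ : Subgroup G).lowerCentralSeries k, ⊤⁆ = ⁅(⊤ : Subgroup H).lowerCentralSeries k, ⊤⁆
      rw [Subgroup.map_commutator, ih, Subgroup.map_top_of_surjective f hf]

/-- Inductive step of Cochran's lemma: if all `Wⱼ ∈ F^(m-1)` and the image of `Wᵢ` in the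
quotient `G = F/⟨⟨[xⱼ, Wⱼ]⟩⟩` lies in `G^(m)`, then `Wᵢ ∈ F^(m)`. -/
theorem word_mem_lcs_step (n : ℕ) (m : ℕ) (hm : 1 ≤ m) (W : Fin n → FreeGroup (Fin n))
    (N : Subgroup (FreeGroup (Fin n)))
    (hN : N = Subgroup.normalClosure
      {r | ∃ i : Fin n, r = FreeGroup.of i * W i * (FreeGroup.of i)⁻¹ * (W i)⁻¹})
    [N.Normal]
    (i : Fin n)
    (hWf : ∀ j : Fin n, W j ∈ paperLCS (FreeGroup (Fin n)) (m - 1))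
    (h : (QuotientGroup.mk (W i) : FreeGroup (Fin n) ⧸ N) ∈
      paperLCS (FreeGroup (Fin n) ⧸ N) m) :
    W i ∈ paperLCS (FreeGroup (Fin n)) m := by
  unfold paperLCS at *
  rcases Nat.lt_or_ge m 2 with hm2 | hm2
  · interval_cases m
    simp [lowerCentralSeries]
  have hsucc : m - 1 = (m - 2) + 1 := by omega
  have hNle : N ≤ (⊤ : Subgroup (FreeGroup (Fin n))).lowerCentralSeries (m - 1) := by
    rw [hN]
    apply Subgroup.normalClosure_le_normal
    rintro r ⟨j, rfl⟩
    have hw := hWf j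
    rw [show m - 1 - 1 = m - 2 from by omega] at hw
    rw [hsucc]
    open scoped commutatorElement in
    have hc : ⁅FreeGroup.of j, W j⁆ ∈
        ⁅(⊤ : Subgroup (FreeGroup (Fin n))),
          (⊤ : Subgroup (FreeGroup (Fin n))).lowerCentralSeries (m - 2)⁆ :=
      Subgroup.commutator_mem_commutator (Subgroup.mem_top _) hw
    rw [Subgroup.commutator_comm] at hc
    exact hc
  have hmap := lcs_map_surj (QuotientGroup.mk' N) (QuotientGroup.mk'_surjective N) (m - 1)
  rw [← hmap] at h
  rcases h with ⟨f, hf, hfe⟩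
  have hmem : f⁻¹ * W i ∈ N := QuotientGroup.eq.mp hfe
  have h2 := hNle hmem
  have := ((⊤ : Subgroup (FreeGroup (Fin n))).lowerCentralSeries (m - 1)).mul_mem hf h2
  simpa using this
end

section
/- Let F be a free group and suppose w ∈ F^(m) for some m ≥ 1. Then w can be written as a product of simple commutators each of length (weight) at least m, i.e. F^(m) is generated by simple commutators of weight ≥ m. -/
open scoped commutatorElement

/-- Simple commutators of weight `k` in a group, with respect to a generating family `x`:
weight-1 simple commutators are the `x i` and their inverses, and a weight-`(k+1)` simple
commutator is `[A, xᵢ^{±1}]` or `[xᵢ^{±1}, A]` with `A` simple of weight `k`. -/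
inductive IsSimpleCommutator {G : Type*} [Group G] {ι : Type*} (x : ι → G) : ℕ → G → Prop
  | gen (i : ι) : IsSimpleCommutator x 1 (x i)
  | genInv (i : ι) : IsSimpleCommutator x 1 (x i)⁻¹
  | left {k : ℕ} {A : G} (i : ι) (hA : IsSimpleCommutator x k A) :
      IsSimpleCommutator x (k + 1) ⁅A, x i⁆
  | leftInv {k : ℕ} {A : G} (i : ι) (hA : IsSimpleCommutator x k A) :
      IsSimpleCommutator x (k + 1) ⁅A, (x i)⁻¹⁆
  | right {k : ℕ} {A : G} (i : ι) (hA : IsSimpleCommutator x k A) :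
      IsSimpleCommutator x (k + 1) ⁅x i, A⁆
  | rightInv {k : ℕ} {A : G} (i : ι) (hA : IsSimpleCommutator x k A) :
      IsSimpleCommutator x (k + 1) ⁅(x i)⁻¹, A⁆

namespace SCaux

variable {α : Type*}

/-- The set of simple commutators of weight at least `m` in the free group. -/
def S (m : ℕ) : Set (FreeGroup α) :=
  {w | ∃ k, m ≤ k ∧ IsSimpleCommutator (FreeGroup.of : α → _) k w}

/-- The subgroup generated by simple commutators of weight at least `m`. -/
def N (m : ℕ) : Subgroup (FreeGroup α) := Subgroup.closure (S m)

lemma N_anti {m m' : ℕ} (h : m ≤ m') : (N m' : Subgroup (FreeGroup α)) ≤ N m :=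
  Subgroup.closure_mono fun _ ⟨k, hk, hs⟩ => ⟨k, h.trans hk, hs⟩

lemma simple_mem_N {k m : ℕ} {s : FreeGroup α} (hm : m ≤ k)
    (hs : IsSimpleCommutator (FreeGroup.of : α → _) k s) : s ∈ N m :=
  Subgroup.subset_closure ⟨k, hm, hs⟩

/-- Conjugation by a generator (or its inverse) preserves the generating set, up to `N m`. -/
lemma conj_letter_mem {m : ℕ} {t : FreeGroup α} (ht : t ∈ S m) (i : α) :
    FreeGroup.of i * t * (FreeGroup.of i)⁻¹ ∈ (N m : Subgroup (FreeGroup α)) ∧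
    (FreeGroup.of i)⁻¹ * t * FreeGroup.of i ∈ (N m : Subgroup (FreeGroup α)) := by
  obtain ⟨k, hm, hs⟩ := ht
  constructor
  · have h1 : FreeGroup.of i * t * (FreeGroup.of i)⁻¹ = ⁅FreeGroup.of i, t⁆ * t := by group
    rw [h1]
    exact mul_mem (simple_mem_N (hm.trans (Nat.le_succ k)) (IsSimpleCommutator.right i hs))
      (simple_mem_N hm hs)
  · have h1 : (FreeGroup.of i)⁻¹ * t * FreeGroup.of i = ⁅(FreeGroup.of i)⁻¹, t⁆ * t := by group
    rw [h1]
    exact mul_mem (simple_mem_N (hm.trans (Nat.le_succ k)) (IsSimpleCommutator.rightInv i hs))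
      (simple_mem_N hm hs)

lemma conj_mem_of_gen {m : ℕ} (a : FreeGroup α)
    (ha : ∀ t ∈ S (α := α) m, a * t * a⁻¹ ∈ N (α := α) m) :
    ∀ h ∈ (N m : Subgroup (FreeGroup α)), a * h * a⁻¹ ∈ (N m : Subgroup (FreeGroup α)) := by
  intro h hh
  have : (N (α := α) m).map (MulAut.conj a).toMonoidHom ≤ N m := by
    rw [N, MonoidHom.map_closure, Subgroup.closure_le]
    rintro _ ⟨t, ht, rfl⟩
    exact ha t ht
  exact this ⟨h, hh, rfl⟩

lemma N_normal (m : ℕ) : (N m : Subgroup (FreeGroup α)).Normal := by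
  rw [← Subgroup.normalizer_eq_top_iff]
  rw [← top_le_iff, ← FreeGroup.closure_range_of α, Subgroup.closure_le]
  rintro _ ⟨i, rfl⟩
  rw [SetLike.mem_coe, Subgroup.mem_normalizer_iff]
  intro h
  constructor
  · intro hh
    exact conj_mem_of_gen _ (fun t ht => (conj_letter_mem ht i).1) h hh
  · intro hh
    have := conj_mem_of_gen ((FreeGroup.of i)⁻¹)
      (fun t ht => by simpa using (conj_letter_mem ht i).2) _ hh
    simpa [mul_assoc] using this

/-- Key lemma: commutator of a simple commutator of weight `k` with anything lies in `N (k+1)`. -/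
lemma comm_simple_mem (g : FreeGroup α) :
    ∀ {k : ℕ} {s : FreeGroup α}, IsSimpleCommutator (FreeGroup.of : α → _) k s →
      ⁅s, g⁆ ∈ (N (k + 1) : Subgroup (FreeGroup α)) := by
  induction g using FreeGroup.induction_on with
  | C1 =>
    intro k s _
    simpa using (N (α := α) (k + 1)).one_mem
  | of i =>
    intro k s hs
    exact simple_mem_N le_rfl (IsSimpleCommutator.left i hs)
  | inv_of i _ =>
    intro k s hs
    exact simple_mem_N le_rfl (IsSimpleCommutator.leftInv i hs)
  | mul g h ihg ihh =>
    intro k s hs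
    have key : ⁅s, g * h⁆ = ⁅s, g⁆ * (g * ⁅s, h⁆ * g⁻¹) := by group
    rw [key]
    exact mul_mem (ihg hs) ((N_normal (k + 1)).conj_mem _ (ihh hs) g)

lemma comm_N_mem {m : ℕ} {u : FreeGroup α} (hu : u ∈ (N m : Subgroup (FreeGroup α)))
    (g : FreeGroup α) : ⁅u, g⁆ ∈ (N (m + 1) : Subgroup (FreeGroup α)) := by
  induction hu using Subgroup.closure_induction with
  | mem t ht =>
    obtain ⟨k, hm, hs⟩ := ht
    exact N_anti (Nat.succ_le_succ hm) (comm_simple_mem g hs)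
  | one => simpa using (N (α := α) (m + 1)).one_mem
  | mul a b _ _ iha ihb =>
    have key : ⁅a * b, g⁆ = a * ⁅b, g⁆ * a⁻¹ * ⁅a, g⁆ := by group
    rw [key]
    exact mul_mem ((N_normal (m + 1)).conj_mem _ ihb a) iha
  | inv a _ iha =>
    have key : ⁅a⁻¹, g⁆ = a⁻¹ * ⁅a, g⁆⁻¹ * a := by group
    rw [key]
    simpa [mul_assoc] using (N_normal (m + 1)).conj_mem _ (inv_mem iha) a⁻¹

lemma lcs_le_N (k : ℕ) : (⊤ : Subgroup (FreeGroup α)).lowerCentralSeries k ≤ N (k + 1) := by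
  induction k with
  | zero =>
    rw [Subgroup.lowerCentralSeries_zero, ← FreeGroup.closure_range_of α]
    apply Subgroup.closure_mono
    rintro _ ⟨i, rfl⟩
    exact ⟨1, le_rfl, IsSimpleCommutator.gen i⟩
  | succ k ih =>
    rw [Subgroup.lowerCentralSeries_succ, Subgroup.commutator_def, Subgroup.closure_le]
    rintro _ ⟨p, hp, q, -, rfl⟩
    have : p * q * p⁻¹ * q⁻¹ = ⁅p, q⁆ := (commutatorElement_def p q).symm
    rw [SetLike.mem_coe]
    exact comm_N_mem (ih hp) q

lemma comm_mem_lcs_succ {j : ℕ} {A g : FreeGroup α}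
    (hA : A ∈ (⊤ : Subgroup (FreeGroup α)).lowerCentralSeries j) :
    ⁅A, g⁆ ∈ (⊤ : Subgroup (FreeGroup α)).lowerCentralSeries (j + 1) := by
  rw [Subgroup.mem_lowerCentralSeries_succ_iff]
  exact Subgroup.subset_closure ⟨A, hA, g, Subgroup.mem_top g, (commutatorElement_def A g).symm⟩

lemma step_mem_lcs {k : ℕ} {A g : FreeGroup α}
    (hA : A ∈ (⊤ : Subgroup (FreeGroup α)).lowerCentralSeries (k - 1)) :
    ⁅A, g⁆ ∈ (⊤ : Subgroup (FreeGroup α)).lowerCentralSeries (k + 1 - 1) := by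
  cases k with
  | zero => exact Subgroup.mem_top _
  | succ j => exact comm_mem_lcs_succ hA

lemma simple_mem_lcs {k : ℕ} {s : FreeGroup α}
    (hs : IsSimpleCommutator (FreeGroup.of : α → _) k s) :
    s ∈ (⊤ : Subgroup (FreeGroup α)).lowerCentralSeries (k - 1) := by
  induction hs with
  | gen i => exact Subgroup.mem_top _
  | genInv i => exact Subgroup.mem_top _
  | left i hA ih => exact step_mem_lcs ih
  | leftInv i hA ih => exact step_mem_lcs ih
  | right i hA ih =>
    rw [← commutatorElement_inv]
    exact inv_mem (step_mem_lcs ih)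
  | rightInv i hA ih =>
    rw [← commutatorElement_inv]
    exact inv_mem (step_mem_lcs ih)

end SCaux

/-- In a free group, every element of `F^(m)` is a product of simple commutators of
weight `≥ m`: `F^(m)` is generated by simple commutators of weight `≥ m`. -/
theorem lcs_eq_closure_simpleCommutators (n : ℕ) (m : ℕ) (hm : 1 ≤ m) :
    paperLCS (FreeGroup (Fin n)) m =
      Subgroup.closure {w | ∃ k, m ≤ k ∧ IsSimpleCommutator (FreeGroup.of : Fin n → _) k w} := by
  apply le_antisymm
  · unfold paperLCS
    have h := SCaux.lcs_le_N (α := Fin n) (m - 1)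
    have : m - 1 + 1 = m := Nat.succ_pred_eq_of_pos hm
    rw [this] at h
    exact h
  · rw [Subgroup.closure_le]
    rintro s ⟨k, hk, hs⟩
    have h1 := SCaux.simple_mem_lcs hs
    exact Subgroup.lowerCentralSeries_antitone (S := ⊤) (Nat.sub_le_sub_right hk 1) h1
end
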